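/- Assume F has bounded variation along x̄ uniformly over A with cumulative variation function η, hypotheses (C1) and (C2) hold for some δ̄ > 0 with η^{δ̄}(T) < +∞, and take δ ∈ (0, δ̄). Let F̂ be the multifunction obtained from F by modifying only the left endpoint: F̂(S,x,a) := F(S⁺,x,a) for x ∈ x̄(S) + δB and a ∈ A, and F̂(t,x,a) := F(t,x,a) otherwise; let η̂ denote its cumulative variation function. Then for every t ∈ (S,T], η(t) = η̂(t) + sup_{a∈A} d_H(F(S⁺, x̄(S), a), F(S, x̄(S), a)). -/

import Mathlib

open Set Metric Filter MeasureTheory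
open scoped ENNReal Topology Classical

noncomputable section

/-- Euclidean space `ℝ^n`. -/
abbrev Eucl (n : ℕ) : Type := EuclideanSpace ℝ (Fin n)

/-- A (strict) partition `a = τ 0 < τ 1 < ⋯ < τ N = b` of the interval `[a,b]`. -/
def IsPartition (a b : ℝ) (N : ℕ) (τ : ℕ → ℝ) : Prop :=
  0 < N ∧ τ 0 = a ∧ τ N = b ∧ ∀ i < N, τ i < τ (i + 1)

/-- The mesh (diameter) of the partition `τ` is at most `ε`. -/
def MeshLE (N : ℕ) (τ : ℕ → ℝ) (ε : ℝ) : Prop :=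
  ∀ i < N, τ (i + 1) - τ i ≤ ε

/-- The tube `x̄([s,t]) + δ B` around the arc `x̄` on `[s,t]`. -/
def tube {n : ℕ} (xbar : ℝ → Eucl n) (s t δ : ℝ) : Set (Eucl n) :=
  {y | ∃ r ∈ Icc s t, dist y (xbar r) ≤ δ}

/-- `I^δ(𝒯) = Σᵢ sup { d_H (F(t_{i+1},x,a), F(t_i,x,a)) : x ∈ x̄([t_i,t_{i+1}]) + δB, a ∈ A }`. -/
def variSum {n k : ℕ} (F : ℝ → Eucl n → Eucl k → Set (Eucl n)) (xbar : ℝ → Eucl n)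
    (A : Set (Eucl k)) (δ : ℝ) (N : ℕ) (τ : ℕ → ℝ) : ℝ≥0∞ :=
  ∑ i ∈ Finset.range N,
    ⨆ x ∈ tube xbar (τ i) (τ (i + 1)) δ, ⨆ a ∈ A,
      EMetric.hausdorffEdist (F (τ (i + 1)) x a) (F (τ i) x a)

/-- `η^δ_ε(t)`: the `(δ,ε)`-perturbed cumulative variation of `F` along `x̄`, uniformly
over `A`, on the base interval `[S,t]`.  (For `t = S` there are no partitions and the
supremum is `0`.) -/
def etaE {n k : ℕ} (F : ℝ → Eucl n → Eucl k → Set (Eucl n)) (xbar : ℝ → Eucl n)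
    (A : Set (Eucl k)) (S δ ε t : ℝ) : ℝ≥0∞ :=
  ⨆ (N : ℕ) (τ : ℕ → ℝ) (_ : IsPartition S t N τ) (_ : MeshLE N τ ε),
    variSum F xbar A δ N τ

/-- `η^δ(t) = lim_{ε ↓ 0} η^δ_ε(t)` (the limit of a monotone family: the infimum). -/
def etaD {n k : ℕ} (F : ℝ → Eucl n → Eucl k → Set (Eucl n)) (xbar : ℝ → Eucl n)
    (A : Set (Eucl k)) (S δ t : ℝ) : ℝ≥0∞ :=
  ⨅ (ε : ℝ) (_ : 0 < ε), etaE F xbar A S δ ε t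

/-- `η(t) = lim_{δ ↓ 0} η^δ(t)`: the cumulative variation function of `F` along `x̄`,
uniformly over `A`. -/
def eta {n k : ℕ} (F : ℝ → Eucl n → Eucl k → Set (Eucl n)) (xbar : ℝ → Eucl n)
    (A : Set (Eucl k)) (S t : ℝ) : ℝ≥0∞ :=
  ⨅ (δ : ℝ) (_ : 0 < δ), etaD F xbar A S δ t

/-- Hypothesis (C1): nonempty closed values, measurability in `t`, and uniform
boundedness `F(t,x,a) ⊆ cB` near the arc. -/
def HypC1 {n k : ℕ} (F : ℝ → Eucl n → Eucl k → Set (Eucl n)) (xbar : ℝ → Eucl n)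
    (A : Set (Eucl k)) (S T δbar : ℝ) : Prop :=
  (∀ t x a, (F t x a).Nonempty ∧ IsClosed (F t x a)) ∧
  (∀ (x : Eucl n) (a : Eucl k), ∀ U : Set (Eucl n), IsOpen U →
     MeasurableSet {t | t ∈ Icc S T ∧ (F t x a ∩ U).Nonempty}) ∧
  (∃ c > (0 : ℝ), ∀ t ∈ Icc S T, ∀ a ∈ A, ∀ x : Eucl n, dist x (xbar t) ≤ δbar →
     F t x a ⊆ closedBall 0 c)

/-- Hypothesis (C2): `F(t,x,a) ⊆ F(t,x',a') + γ(|x-x'| + |a-a'|)B` near the arc, where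
`γ` is a modulus of continuity. -/
def HypC2 {n k : ℕ} (F : ℝ → Eucl n → Eucl k → Set (Eucl n)) (xbar : ℝ → Eucl n)
    (A : Set (Eucl k)) (S T δbar : ℝ) (γ : ℝ → ℝ) : Prop :=
  ContinuousOn γ (Ici 0) ∧ MonotoneOn γ (Ici 0) ∧ γ 0 = 0 ∧ (∀ r ≥ (0 : ℝ), 0 ≤ γ r) ∧
  ∀ t ∈ Icc S T, ∀ x x' : Eucl n, ∀ a ∈ A, ∀ a' ∈ A,
    dist x (xbar t) ≤ δbar → dist x' (xbar t) ≤ δbar →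
    ∀ y ∈ F t x a, ∃ z ∈ F t x' a', dist y z ≤ γ (dist x x' + dist a a')

end

noncomputable section

/-- The multifunction `F̂` obtained from `F` by replacing only the left endpoint value
near the arc by the right limit `Fp` at `S`. -/
def leftMod {n k : ℕ} (S δ : ℝ) (xbar : ℝ → Eucl n)
    (F : ℝ → Eucl n → Eucl k → Set (Eucl n))
    (Fp : Eucl n → Eucl k → Set (Eucl n)) : ℝ → Eucl n → Eucl k → Set (Eucl n) :=
  fun t x a =>
    if t = S ∧ dist x (xbar S) ≤ δ then Fp x a else F t x a

end

/-!
Only the first step `[S, s]` of a partition of `[S, t]` sees the modification at `S`, and on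
a short first step the tube around `x̄` lies in a small ball around `x̄(S)`. On that ball the
right limit `F(S⁺,·,·)` inherits the modulus `γ` of the maps `F(s,·,·)`, and the convergence
`F(s, x̄(S), ·) → F(S⁺, x̄(S), ·)` is uniform on the compact set `A` by equicontinuity. Hence
the first summands of `I^δ'` for `F` and for `F̂` differ by the jump
`sup_a d_H(F(S⁺,x̄(S),a), F(S,x̄(S),a))` up to an error that vanishes as `δ' → 0`, the mesh
tending to `0` first.
-/

section Partitions

variable {S t : ℝ} {N : ℕ} {τ : ℕ → ℝ}

theorem IsPartition.lt_of_pos (hp : IsPartition S t N τ) {i : ℕ} (hi : 0 < i) (hiN : i ≤ N) :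
    S < τ i := by
  induction i, hi using Nat.le_induction with
  | base => rw [← hp.2.1]; exact hp.2.2.2 0 (by omega)
  | succ i hi ih => exact (ih (by omega)).trans (hp.2.2.2 i (by omega))

theorem exists_isPartition_meshLE (h : S < t) {ε : ℝ} (hε : 0 < ε) :
    ∃ N τ, IsPartition S t N τ ∧ MeshLE N τ ε := by
  set N := ⌈(t - S) / ε⌉₊
  have hN : 0 < N := Nat.ceil_pos.mpr (div_pos (sub_pos.mpr h) hε)
  have hNR : (0 : ℝ) < N := Nat.cast_pos.mpr hN
  have hstep : (t - S) / N ≤ ε := by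
    rw [div_le_iff₀ hNR, ← div_le_iff₀' hε]
    exact Nat.le_ceil _
  refine ⟨N, fun i => S + i * ((t - S) / N), ⟨hN, by simp, by field_simp; ring, fun i _ => ?_⟩,
    fun i _ => ?_⟩
  · push_cast
    nlinarith [div_pos (sub_pos.mpr h) hNR]
  · push_cast
    linarith

end Partitions

open Metric

section Variation

variable {n k : ℕ} {F G : ℝ → Eucl n → Eucl k → Set (Eucl n)} {xbar : ℝ → Eucl n}
  {A : Set (Eucl k)} {S t : ℝ}

noncomputable def stepVar (F : ℝ → Eucl n → Eucl k → Set (Eucl n)) (xbar : ℝ → Eucl n)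
    (A : Set (Eucl k)) (δ s t : ℝ) : ℝ≥0∞ :=
  ⨆ x ∈ tube xbar s t δ, ⨆ a ∈ A, hausdorffEDist (F t x a) (F s x a)

theorem mem_tube_of_mem_Icc {s r δ : ℝ} (hr : r ∈ Icc s t) (hδ : 0 ≤ δ) :
    xbar r ∈ tube xbar s t δ :=
  ⟨r, hr, by rwa [dist_self]⟩

theorem le_stepVar {s δ : ℝ} {x : Eucl n} {a : Eucl k} (hx : x ∈ tube xbar s t δ) (ha : a ∈ A) :
    hausdorffEDist (F t x a) (F s x a) ≤ stepVar F xbar A δ s t :=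
  le_iSup₂_of_le x hx (le_iSup₂_of_le a ha le_rfl)

theorem variSum_succ (δ : ℝ) (N : ℕ) (τ : ℕ → ℝ) :
    variSum F xbar A δ (N + 1) τ =
      stepVar F xbar A δ (τ 0) (τ 1) + variSum F xbar A δ N (fun i => τ (i + 1)) := by
  rw [variSum, Finset.sum_range_succ', add_comm]
  rfl

theorem variSum_congr {δ : ℝ} {N : ℕ} {τ : ℕ → ℝ} (h : ∀ i ≤ N, F (τ i) = G (τ i)) :
    variSum F xbar A δ N τ = variSum G xbar A δ N τ := by
  refine Finset.sum_congr rfl fun i hi => ?_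
  rw [Finset.mem_range] at hi
  rw [h i hi.le, h (i + 1) hi]

theorem variSum_le_etaE {δ ε : ℝ} {N : ℕ} {τ : ℕ → ℝ} (hp : IsPartition S t N τ)
    (hm : MeshLE N τ ε) : variSum F xbar A δ N τ ≤ etaE F xbar A S δ ε t :=
  le_iSup_of_le N <| le_iSup_of_le τ <| le_iSup_of_le hp <| le_iSup_of_le hm le_rfl

theorem etaE_le {δ ε : ℝ} {b : ℝ≥0∞}
    (h : ∀ N τ, IsPartition S t N τ → MeshLE N τ ε → variSum F xbar A δ N τ ≤ b) :
    etaE F xbar A S δ ε t ≤ b :=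
  iSup_le fun N => iSup_le fun τ => iSup_le fun hp => iSup_le fun hm => h N τ hp hm

theorem monotone_etaE (δ : ℝ) : Monotone fun ε => etaE F xbar A S δ ε t :=
  fun _ _ h => etaE_le fun _ _ hp hm => variSum_le_etaE hp fun i hi => (hm i hi).trans h

theorem monotone_etaD : Monotone fun δ => etaD F xbar A S δ t := by
  intro δ₁ δ₂ h
  refine iInf₂_mono fun ε _ => etaE_le fun N τ hp hm => (variSum_le_etaE hp hm).trans' ?_
  refine Finset.sum_le_sum fun i _ => iSup₂_mono' fun x ⟨r, hr, hx⟩ => ?_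
  exact ⟨x, ⟨r, hr, hx.trans h⟩, le_rfl⟩

theorem tendsto_nhdsGT_biInf {f : ℝ → ℝ≥0∞} (hf : Monotone f) (a : ℝ) :
    Tendsto f (𝓝[>] a) (𝓝 (⨅ x > a, f x)) := by
  simpa only [sInf_image, mem_Ioi] using hf.tendsto_nhdsGT a

theorem etaE_add_le {δ ε : ℝ} (hSt : S < t) (hε : 0 < ε) {c b : ℝ≥0∞}
    (h : ∀ N τ, IsPartition S t N τ → MeshLE N τ ε → variSum F xbar A δ N τ + c ≤ b) :
    etaE F xbar A S δ ε t + c ≤ b := by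
  obtain ⟨N₀, τ₀, hp₀, hm₀⟩ := exists_isPartition_meshLE hSt hε
  have hne : ∃ q : ℕ × (ℕ → ℝ), IsPartition S t q.1 q.2 ∧ MeshLE q.1 q.2 ε :=
    ⟨(N₀, τ₀), hp₀, hm₀⟩
  have hsup : etaE F xbar A S δ ε t = ⨆ q : ℕ × (ℕ → ℝ),
      ⨆ (_ : IsPartition S t q.1 q.2 ∧ MeshLE q.1 q.2 ε), variSum F xbar A δ q.1 q.2 := by
    rw [iSup_prod]
    simp only [etaE, iSup_and]
  rw [hsup, ENNReal.biSup_add' hne]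
  exact iSup₂_le fun q hq => h q.1 q.2 hq.1 hq.2

theorem etaE_add_le_of_stepVar {δ ε : ℝ} (hFG : ∀ s ≠ S, F s = G s) (hSt : S < t)
    (hε : 0 < ε) {c₁ c₂ : ℝ≥0∞}
    (h : ∀ s ∈ Ioc S (S + ε), stepVar F xbar A δ S s + c₁ ≤ stepVar G xbar A δ S s + c₂) :
    etaE F xbar A S δ ε t + c₁ ≤ etaE G xbar A S δ ε t + c₂ := by
  refine etaE_add_le hSt hε fun N τ hp hm => ?_
  obtain ⟨N, rfl⟩ : ∃ N', N = N' + 1 := ⟨N - 1, (Nat.succ_pred_eq_of_pos hp.1).symm⟩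
  have hτ1 : τ 1 ∈ Ioc S (S + ε) :=
    ⟨hp.lt_of_pos one_pos (by omega), by linarith [hm 0 (by omega), hp.2.1]⟩
  have htail : variSum F xbar A δ N (fun i => τ (i + 1)) =
      variSum G xbar A δ N (fun i => τ (i + 1)) :=
    variSum_congr fun i hi => hFG _ (hp.lt_of_pos (by omega) (by omega)).ne'
  calc variSum F xbar A δ (N + 1) τ + c₁
      = (stepVar F xbar A δ S (τ 1) + c₁) + variSum G xbar A δ N (fun i => τ (i + 1)) := by
        rw [variSum_succ, htail, hp.2.1, add_right_comm]
    _ ≤ (stepVar G xbar A δ S (τ 1) + c₂) + variSum G xbar A δ N (fun i => τ (i + 1)) :=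
        add_le_add (h _ hτ1) le_rfl
    _ = variSum G xbar A δ (N + 1) τ + c₂ := by rw [variSum_succ, hp.2.1, add_right_comm]
    _ ≤ etaE G xbar A S δ ε t + c₂ := add_le_add (variSum_le_etaE hp hm) le_rfl

theorem etaD_add_le_of_stepVar {δ : ℝ} (hFG : ∀ s ≠ S, F s = G s) (hSt : S < t)
    {c₁ c₂ : ℝ≥0∞}
    (h : ∀ᶠ s in 𝓝[>] S, stepVar F xbar A δ S s + c₁ ≤ stepVar G xbar A δ S s + c₂) :
    etaD F xbar A S δ t + c₁ ≤ etaD G xbar A S δ t + c₂ := by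
  obtain ⟨u, hu, hsub⟩ := mem_nhdsGT_iff_exists_Ioc_subset.1 h
  refine le_of_tendsto_of_tendsto ((tendsto_nhdsGT_biInf (monotone_etaE δ) 0).add_const c₁)
    ((tendsto_nhdsGT_biInf (monotone_etaE δ) 0).add_const c₂) ?_
  filter_upwards [Ioo_mem_nhdsGT (sub_pos.2 (mem_Ioi.1 hu))] with ε hε
  exact etaE_add_le_of_stepVar hFG hSt hε.1 fun s hs => hsub ⟨hs.1, by linarith [hs.2, hε.2]⟩

theorem eta_add_le_of_stepVar (hFG : ∀ s ≠ S, F s = G s) (hSt : S < t) {c₁ c₂ : ℝ≥0∞}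
    (h : ∀ θ : ℝ, 0 < θ → ∀ᶠ δ in 𝓝[>] 0, ∀ᶠ s in 𝓝[>] S,
      stepVar F xbar A δ S s + c₁ ≤ stepVar G xbar A δ S s + c₂ + ENNReal.ofReal θ) :
    eta F xbar A S t + c₁ ≤ eta G xbar A S t + c₂ := by
  refine ENNReal.le_of_forall_pos_le_add fun θ hθ _ => ?_
  rw [add_assoc]
  refine le_of_tendsto_of_tendsto ((tendsto_nhdsGT_biInf monotone_etaD 0).add_const c₁)
    ((tendsto_nhdsGT_biInf monotone_etaD 0).add_const (c₂ + θ)) ?_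
  filter_upwards [h θ hθ] with δ hδ
  refine etaD_add_le_of_stepVar hFG hSt (hδ.mono fun s hs => ?_)
  rwa [← add_assoc, ← ENNReal.ofReal_coe_nnreal]

end Variation

section Modulus

variable {α β E : Type*} [PseudoMetricSpace α] [PseudoMetricSpace β] [PseudoEMetricSpace E]

def HausdorffModulus (Φ : α → β → Set E) (X : Set α) (A : Set β) (ω : ℝ → ℝ) : Prop :=
  ∀ x ∈ X, ∀ x' ∈ X, ∀ a ∈ A, ∀ a' ∈ A,
    hausdorffEDist (Φ x a) (Φ x' a') ≤ ENNReal.ofReal (ω (dist x x' + dist a a'))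

variable {Φ Ψ : α → β → Set E} {X Y : Set α} {A : Set β} {ω : ℝ → ℝ}

theorem HausdorffModulus.mono (h : HausdorffModulus Φ X A ω) (hYX : Y ⊆ X) :
    HausdorffModulus Φ Y A ω :=
  fun x hx x' hx' => h x (hYX hx) x' (hYX hx')

theorem HausdorffModulus.hausdorffEDist_le (h : HausdorffModulus Φ X A ω)
    (hω : MonotoneOn ω (Ici 0)) {x x' : α} {a a' : β} (hx : x ∈ X) (hx' : x' ∈ X) (ha : a ∈ A)
    (ha' : a' ∈ A) {r : ℝ} (hr : dist x x' + dist a a' ≤ r) :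
    hausdorffEDist (Φ x a) (Φ x' a') ≤ ENNReal.ofReal (ω r) := by
  have h0 : 0 ≤ dist x x' + dist a a' := by positivity
  exact (h x hx x' hx' a ha a' ha').trans
    (ENNReal.ofReal_le_ofReal (hω h0 (h0.trans hr) hr))

theorem HausdorffModulus.hausdorffEDist_le_add (hΦ : HausdorffModulus Φ X A ω)
    (hΨ : HausdorffModulus Ψ X A ω) (hω : MonotoneOn ω (Ici 0)) {x x₀ : α} {a : β}
    (hx : x ∈ X) (hx₀ : x₀ ∈ X) (ha : a ∈ A) {r : ℝ} (hr : dist x x₀ ≤ r) :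
    hausdorffEDist (Φ x a) (Ψ x a) ≤
      hausdorffEDist (Φ x₀ a) (Ψ x₀ a) + (ENNReal.ofReal (ω r) + ENNReal.ofReal (ω r)) := by
  have hr' : dist x x₀ + dist a a ≤ r := by rwa [dist_self, add_zero]
  have hr'' : dist x₀ x + dist a a ≤ r := by rwa [dist_self, add_zero, dist_comm]
  calc hausdorffEDist (Φ x a) (Ψ x a)
      ≤ hausdorffEDist (Φ x a) (Φ x₀ a) +
          (hausdorffEDist (Φ x₀ a) (Ψ x₀ a) + hausdorffEDist (Ψ x₀ a) (Ψ x a)) :=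
        hausdorffEDist_triangle.trans (add_le_add le_rfl hausdorffEDist_triangle)
    _ ≤ ENNReal.ofReal (ω r) + (hausdorffEDist (Φ x₀ a) (Ψ x₀ a) + ENNReal.ofReal (ω r)) := by
        gcongr
        · exact hΦ.hausdorffEDist_le hω hx hx₀ ha ha hr'
        · exact hΨ.hausdorffEDist_le hω hx₀ hx ha ha hr''
    _ = _ := by ring

theorem HausdorffModulus.of_tendsto {ι : Type*} {l : Filter ι} [l.NeBot] {f : ι → α → β → Set E}
    (hf : ∀ᶠ i in l, HausdorffModulus (f i) X A ω)
    (hlim : ∀ x ∈ X, ∀ a ∈ A, Tendsto (fun i => hausdorffEDist (f i x a) (Φ x a)) l (𝓝 0)) :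
    HausdorffModulus Φ X A ω := by
  intro x hx x' hx' a ha a' ha'
  set c := ENNReal.ofReal (ω (dist x x' + dist a a'))
  have hbound : ∀ᶠ i in l, hausdorffEDist (Φ x a) (Φ x' a') ≤
      hausdorffEDist (f i x a) (Φ x a) + c + hausdorffEDist (f i x' a') (Φ x' a') := by
    filter_upwards [hf] with i hi
    calc hausdorffEDist (Φ x a) (Φ x' a')
        ≤ hausdorffEDist (Φ x a) (f i x a) +
            (hausdorffEDist (f i x a) (f i x' a') + hausdorffEDist (f i x' a') (Φ x' a')) :=
          hausdorffEDist_triangle.trans (add_le_add le_rfl hausdorffEDist_triangle)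
      _ ≤ _ := by
          rw [hausdorffEDist_comm, ← add_assoc]
          gcongr
          exact hi x hx x' hx' a ha a' ha'
  have hlim' := ((hlim x hx a ha).add_const c).add (hlim x' hx' a' ha')
  rw [zero_add, add_zero] at hlim'
  exact ge_of_tendsto hlim' hbound

theorem IsCompact.eventually_hausdorffEDist_le {ι : Type*} {l : Filter ι} {K : Set β}
    (hK : IsCompact K) {f : ι → β → Set E} {g : β → Set E} {r : ℝ} (hr : 0 < r) {θ : ℝ≥0∞}
    (hθ : 0 < θ) (hlim : ∀ b ∈ K, Tendsto (fun i => hausdorffEDist (f i b) (g b)) l (𝓝 0))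
    (hf : ∀ᶠ i in l, ∀ b ∈ K, ∀ b' ∈ K, dist b b' < r → hausdorffEDist (f i b) (f i b') ≤ θ)
    (hg : ∀ b ∈ K, ∀ b' ∈ K, dist b b' < r → hausdorffEDist (g b) (g b') ≤ θ) :
    ∀ᶠ i in l, ∀ b ∈ K, hausdorffEDist (f i b) (g b) ≤ θ + θ + θ := by
  obtain ⟨K₀, hK₀K, hK₀, hcover⟩ := finite_cover_balls_of_compact hK hr
  have hnet : ∀ᶠ i in l, ∀ b₀ ∈ K₀, hausdorffEDist (f i b₀) (g b₀) ≤ θ :=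
    (eventually_all_finite hK₀).2 fun b₀ hb₀ =>
      ((hlim b₀ (hK₀K hb₀)).eventually_lt_const hθ).mono fun _ => le_of_lt
  filter_upwards [hf, hnet] with i hfi hneti b hb
  obtain ⟨b₀, hb₀, hbb₀⟩ := mem_iUnion₂.1 (hcover hb)
  have hd : dist b b₀ < r := mem_ball.1 hbb₀
  calc hausdorffEDist (f i b) (g b)
      ≤ hausdorffEDist (f i b) (f i b₀) +
          (hausdorffEDist (f i b₀) (g b₀) + hausdorffEDist (g b₀) (g b)) :=
        hausdorffEDist_triangle.trans (add_le_add le_rfl hausdorffEDist_triangle)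
    _ ≤ θ + (θ + θ) := by
        gcongr
        · exact hfi b hb b₀ (hK₀K hb₀) hd
        · exact hneti b₀ hb₀
        · exact hg b₀ (hK₀K hb₀) b hb (by rwa [dist_comm])
    _ = θ + θ + θ := (add_assoc _ _ _).symm

end Modulus

section LeftEndpoint

variable {n k : ℕ} {F : ℝ → Eucl n → Eucl k → Set (Eucl n)} {xbar : ℝ → Eucl n}
  {A : Set (Eucl k)} {S T δbar δ : ℝ} {γ : ℝ → ℝ} {Fp : Eucl n → Eucl k → Set (Eucl n)}

theorem HypC2.hausdorffModulus (hC2 : HypC2 F xbar A S T δbar γ) {t : ℝ} (ht : t ∈ Icc S T) :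
    HausdorffModulus (F t) (closedBall (xbar t) δbar) A γ := by
  intro x hx x' hx' a ha a' ha'
  obtain ⟨-, -, -, -, h⟩ := hC2
  refine hausdorffEDist_le_of_mem_edist (fun y hy => ?_) (fun y hy => ?_)
  · obtain ⟨z, hz, hd⟩ := h t ht x x' a ha a' ha' hx hx' y hy
    exact ⟨z, hz, by rw [edist_dist]; exact ENNReal.ofReal_le_ofReal hd⟩
  · obtain ⟨z, hz, hd⟩ := h t ht x' x a' ha' a ha hx' hx y hy
    refine ⟨z, hz, ?_⟩
    rw [edist_dist, dist_comm x, dist_comm a]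
    exact ENNReal.ofReal_le_ofReal hd

theorem HypC2.exists_gamma_le (hC2 : HypC2 F xbar A S T δbar γ) {θ : ℝ} (hθ : 0 < θ) :
    ∃ r > 0, γ r ≤ θ := by
  have hγ : Tendsto γ (𝓝[>] 0) (𝓝 0) := by
    simpa only [hC2.2.2.1] using
      (hC2.1 0 self_mem_Ici).tendsto.mono_left (nhdsWithin_mono _ Ioi_subset_Ici_self)
  obtain ⟨r, hr, hr0⟩ := ((hγ.eventually (eventually_le_nhds hθ)).and self_mem_nhdsWithin).exists
  exact ⟨r, hr0, hr⟩

theorem eventually_tube_subset_closedBall (hxc : ContinuousWithinAt xbar (Ici S) S) {ρ : ℝ}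
    (hρ : 0 < ρ) (δ : ℝ) : ∀ᶠ s in 𝓝[>] S, tube xbar S s δ ⊆ closedBall (xbar S) (δ + ρ) := by
  obtain ⟨u, hu, hsub⟩ :=
    mem_nhdsGE_iff_exists_Ico_subset.1 (hxc.tendsto.eventually (closedBall_mem_nhds _ hρ))
  filter_upwards [Ioo_mem_nhdsGT (mem_Ioi.1 hu)] with s hs
  rintro x ⟨r, hr, hxr⟩
  exact (dist_triangle _ _ _).trans (add_le_add hxr (hsub ⟨hr.1, hr.2.trans_lt hs.2⟩))

theorem leftMod_of_ne {t : ℝ} (ht : t ≠ S) : leftMod S δ xbar F Fp t = F t := by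
  ext x a : 2
  simp [leftMod, ht]

theorem leftMod_self_of_mem {x : Eucl n} {a : Eucl k} (hx : x ∈ closedBall (xbar S) δ) :
    leftMod S δ xbar F Fp S x a = Fp x a :=
  if_pos ⟨rfl, hx⟩

theorem stepVar_le_stepVar_leftMod_add {s δ' : ℝ} (hs : S < s)
    (hsub : tube xbar S s δ' ⊆ closedBall (xbar S) δ) {c : ℝ≥0∞}
    (hc : ∀ x ∈ tube xbar S s δ', ∀ a ∈ A, hausdorffEDist (Fp x a) (F S x a) ≤ c) :
    stepVar F xbar A δ' S s ≤ stepVar (leftMod S δ xbar F Fp) xbar A δ' S s + c := by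
  refine iSup₂_le fun x hx => iSup₂_le fun a ha => ?_
  have hstep : hausdorffEDist (F s x a) (Fp x a) ≤
      stepVar (leftMod S δ xbar F Fp) xbar A δ' S s := by
    rw [← leftMod_self_of_mem (F := F) (Fp := Fp) (a := a) (hsub hx),
      ← leftMod_of_ne (F := F) (Fp := Fp) hs.ne']
    exact le_stepVar hx ha
  exact hausdorffEDist_triangle.trans (add_le_add hstep (hc x hx a ha))

theorem stepVar_leftMod_add_le {s δ' : ℝ} (hs : S < s) (hδ' : 0 ≤ δ')
    (hsub : tube xbar S s δ' ⊆ closedBall (xbar S) δ) {c : ℝ≥0∞}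
    (hc : ∀ x ∈ tube xbar S s δ', ∀ a ∈ A, hausdorffEDist (F s x a) (Fp x a) ≤ c) :
    stepVar (leftMod S δ xbar F Fp) xbar A δ' S s +
        ⨆ a ∈ A, hausdorffEDist (Fp (xbar S) a) (F S (xbar S) a) ≤
      stepVar F xbar A δ' S s + (c + c) := by
  have hS : xbar S ∈ tube xbar S s δ' := mem_tube_of_mem_Icc ⟨le_rfl, hs.le⟩ hδ'
  have hG : stepVar (leftMod S δ xbar F Fp) xbar A δ' S s ≤ c := by
    refine iSup₂_le fun x hx => iSup₂_le fun a ha => ?_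
    rw [leftMod_self_of_mem (hsub hx), leftMod_of_ne hs.ne']
    exact hc x hx a ha
  have hjump : ⨆ a ∈ A, hausdorffEDist (Fp (xbar S) a) (F S (xbar S) a) ≤
      c + stepVar F xbar A δ' S s := by
    refine iSup₂_le fun a ha => hausdorffEDist_triangle.trans (add_le_add ?_ (le_stepVar hS ha))
    rw [hausdorffEDist_comm]
    exact hc _ hS a ha
  calc _ ≤ c + (c + stepVar F xbar A δ' S s) := add_le_add hG hjump
    _ = _ := by ring


theorem HypC2.eventually_hausdorffModulus (hST : S < T) (hxc : ContinuousWithinAt xbar (Ici S) S)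
    (hC2 : HypC2 F xbar A S T δbar γ) {ρ : ℝ} (hρ : ρ < δbar) :
    ∀ᶠ s in 𝓝[>] S, HausdorffModulus (F s) (closedBall (xbar S) ρ) A γ := by
  have hxbar : ∀ᶠ s in 𝓝[>] S, dist (xbar s) (xbar S) ≤ δbar - ρ :=
    (hxc.tendsto.mono_left (nhdsWithin_mono _ Ioi_subset_Ici_self)).eventually
      (closedBall_mem_nhds _ (sub_pos.2 hρ))
  filter_upwards [hxbar, Ioc_mem_nhdsGT hST] with s hs hsT
  refine (hC2.hausdorffModulus ⟨hsT.1.le, hsT.2⟩).mono (closedBall_subset_closedBall' ?_)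
  rw [dist_comm]
  linarith

theorem hausdorffModulus_rightLim (hST : S < T) (hxc : ContinuousWithinAt xbar (Ici S) S)
    (hC2 : HypC2 F xbar A S T δbar γ) (hδδ : δ < δbar)
    (hFp : ∀ x ∈ closedBall (xbar S) δ, ∀ a ∈ A,
      Tendsto (fun s => hausdorffEDist (F s x a) (Fp x a)) (𝓝[>] S) (𝓝 0)) :
    HausdorffModulus Fp (closedBall (xbar S) δ) A γ :=
  .of_tendsto (hC2.eventually_hausdorffModulus hST hxc hδδ) hFp

theorem eventually_hausdorffEDist_rightLim_le (hST : S < T)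
    (hxc : ContinuousWithinAt xbar (Ici S) S) (hA : IsCompact A)
    (hC2 : HypC2 F xbar A S T δbar γ) (hδ : 0 < δ) (hδδ : δ < δbar)
    (hFp : ∀ x ∈ closedBall (xbar S) δ, ∀ a ∈ A,
      Tendsto (fun s => hausdorffEDist (F s x a) (Fp x a)) (𝓝[>] S) (𝓝 0))
    {θ : ℝ} (hθ : 0 < θ) :
    ∀ᶠ s in 𝓝[>] S, ∀ a ∈ A, hausdorffEDist (F s (xbar S) a) (Fp (xbar S) a) ≤
      ENNReal.ofReal θ + ENNReal.ofReal θ + ENNReal.ofReal θ := by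
  obtain ⟨r, hr, hγr⟩ := hC2.exists_gamma_le hθ
  have hS : xbar S ∈ closedBall (xbar S) δ := mem_closedBall_self hδ.le
  have hclose : ∀ {Φ : Eucl n → Eucl k → Set (Eucl n)},
      HausdorffModulus Φ (closedBall (xbar S) δ) A γ → ∀ a ∈ A, ∀ a' ∈ A, dist a a' < r →
        hausdorffEDist (Φ (xbar S) a) (Φ (xbar S) a') ≤ ENNReal.ofReal θ :=
    fun hΦ a ha a' ha' hd => (hΦ.hausdorffEDist_le hC2.2.1 hS hS ha ha'
      (by rw [dist_self, zero_add]; exact hd.le)).trans (ENNReal.ofReal_le_ofReal hγr)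
  exact hA.eventually_hausdorffEDist_le hr (ENNReal.ofReal_pos.2 hθ) (fun a ha => hFp _ hS a ha)
    ((hC2.eventually_hausdorffModulus hST hxc hδδ).mono fun s hs => hclose hs)
    (hclose (hausdorffModulus_rightLim hST hxc hC2 hδδ hFp))

theorem eventually_stepVar_leftMod_le (hST : S < T) (hxc : ContinuousWithinAt xbar (Ici S) S)
    (hC2 : HypC2 F xbar A S T δbar γ) (hδδ : δ < δbar)
    (hFpmod : HausdorffModulus Fp (closedBall (xbar S) δ) A γ) {δ' r : ℝ} (hδ' : 0 < δ')
    (hδ'δ : δ' + δ' ≤ δ) (hδ'r : δ' + δ' ≤ r) {u : ℝ≥0∞}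
    (hu : ∀ᶠ s in 𝓝[>] S, ∀ a ∈ A, hausdorffEDist (F s (xbar S) a) (Fp (xbar S) a) ≤ u) :
    ∀ᶠ s in 𝓝[>] S,
      stepVar F xbar A δ' S s ≤ stepVar (leftMod S δ xbar F Fp) xbar A δ' S s +
          ((⨆ a ∈ A, hausdorffEDist (Fp (xbar S) a) (F S (xbar S) a)) +
            (ENNReal.ofReal (γ r) + ENNReal.ofReal (γ r))) ∧
      stepVar (leftMod S δ xbar F Fp) xbar A δ' S s +
          (⨆ a ∈ A, hausdorffEDist (Fp (xbar S) a) (F S (xbar S) a)) ≤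
        stepVar F xbar A δ' S s + ((u + (ENNReal.ofReal (γ r) + ENNReal.ofReal (γ r))) +
          (u + (ENNReal.ofReal (γ r) + ENNReal.ofReal (γ r)))) := by
  set X := closedBall (xbar S) (δ' + δ')
  have hXδ : X ⊆ closedBall (xbar S) δ := closedBall_subset_closedBall hδ'δ
  have hS : xbar S ∈ X := mem_closedBall_self (by linarith)
  have hFSmod := (hC2.hausdorffModulus ⟨le_rfl, hST.le⟩).mono
    (closedBall_subset_closedBall (show δ' + δ' ≤ δbar by linarith))
  filter_upwards [eventually_tube_subset_closedBall hxc hδ' δ',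
    hC2.eventually_hausdorffModulus hST hxc (show δ' + δ' < δbar by linarith), hu,
    self_mem_nhdsWithin] with s hsub hFsmod hus hs
  have hdist : ∀ x ∈ tube xbar S s δ', dist x (xbar S) ≤ r :=
    fun x hx => (mem_closedBall.1 (hsub hx)).trans hδ'r
  refine ⟨stepVar_le_stepVar_leftMod_add hs (hsub.trans hXδ) fun x hx a ha => ?_,
    stepVar_leftMod_add_le hs hδ'.le (hsub.trans hXδ) fun x hx a ha => ?_⟩
  · refine ((hFpmod.mono hXδ).hausdorffEDist_le_add hFSmod hC2.2.1 (hsub hx) hS ha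
      (hdist x hx)).trans ?_
    gcongr
    exact le_iSup₂_of_le a ha le_rfl
  · refine (hFsmod.hausdorffEDist_le_add (hFpmod.mono hXδ) hC2.2.1 (hsub hx) hS ha
      (hdist x hx)).trans ?_
    gcongr
    exact hus a ha

theorem eventually_stepVar_leftMod (hST : S < T) (hxc : ContinuousWithinAt xbar (Ici S) S)
    (hA : IsCompact A) (hC2 : HypC2 F xbar A S T δbar γ) (hδ : 0 < δ) (hδδ : δ < δbar)
    (hFp : ∀ x ∈ closedBall (xbar S) δ, ∀ a ∈ A,
      Tendsto (fun s => hausdorffEDist (F s x a) (Fp x a)) (𝓝[>] S) (𝓝 0))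
    {θ : ℝ} (hθ : 0 < θ) :
    ∀ᶠ δ' in 𝓝[>] 0, ∀ᶠ s in 𝓝[>] S,
      stepVar F xbar A δ' S s ≤ stepVar (leftMod S δ xbar F Fp) xbar A δ' S s +
          (⨆ a ∈ A, hausdorffEDist (Fp (xbar S) a) (F S (xbar S) a)) + ENNReal.ofReal θ ∧
      stepVar (leftMod S δ xbar F Fp) xbar A δ' S s +
          (⨆ a ∈ A, hausdorffEDist (Fp (xbar S) a) (F S (xbar S) a)) ≤
        stepVar F xbar A δ' S s + ENNReal.ofReal θ := by
  -- the lower estimate below costs `2 * (3 * η + 2 * η)`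
  set η := ENNReal.ofReal (θ / 10)
  have hη : ENNReal.ofReal θ = 10 * η := by
    rw [← ENNReal.ofReal_ofNat, ← ENNReal.ofReal_mul (by norm_num)]
    ring_nf
  obtain ⟨r, hr, hγr⟩ := hC2.exists_gamma_le (show 0 < θ / 10 by positivity)
  have hω : ENNReal.ofReal (γ r) ≤ η := ENNReal.ofReal_le_ofReal hγr
  have hunif := eventually_hausdorffEDist_rightLim_le hST hxc hA hC2 hδ hδδ hFp
    (show 0 < θ / 10 by positivity)
  filter_upwards [Ioo_mem_nhdsGT (show 0 < min r δ / 2 by positivity)] with δ' ⟨hδ'0, hδ'⟩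
  filter_upwards [eventually_stepVar_leftMod_le hST hxc hC2 hδδ
    (hausdorffModulus_rightLim hST hxc hC2 hδδ hFp) (r := r) hδ'0
    (by linarith [min_le_right r δ]) (by linarith [min_le_left r δ]) hunif] with s hs
  refine ⟨hs.1.trans ?_, hs.2.trans ?_⟩
  · rw [hη, add_assoc]
    gcongr
    calc ENNReal.ofReal (γ r) + ENNReal.ofReal (γ r) ≤ η + η := add_le_add hω hω
      _ ≤ 10 * η := by rw [← two_mul]; gcongr; norm_num
  · rw [hη]
    gcongr
    calc _ ≤ (η + η + η + (η + η)) + (η + η + η + (η + η)) := by gcongr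
      _ = 10 * η := by ring

end LeftEndpoint

theorem stmt19_general {n k : ℕ} (S T : ℝ) (hST : S < T)
    (A : Set (Eucl k)) (hA : IsCompact A)
    (F : ℝ → Eucl n → Eucl k → Set (Eucl n))
    (xbar : ℝ → Eucl n) (hx : ContinuousOn xbar (Icc S T))
    (δbar : ℝ)
    (γ : ℝ → ℝ) (hC2 : HypC2 F xbar A S T δbar γ)
    (δ : ℝ) (hδ : 0 < δ) (hδδ : δ < δbar)
    (Fp : Eucl n → Eucl k → Set (Eucl n))
    (hFp : ∀ x ∈ closedBall (xbar S) δ, ∀ a ∈ A,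
      Tendsto (fun s => EMetric.hausdorffEdist (F s x a) (Fp x a))
        (𝓝[Ioc S T] S) (𝓝 0)) :
    ∀ t : ℝ, S < t → t ≤ T →
      eta F xbar A S t =
        eta (leftMod S δ xbar F Fp) xbar A S t +
          ⨆ a ∈ A, EMetric.hausdorffEdist (Fp (xbar S) a) (F S (xbar S) a) := by
  intro t hSt _
  have hxc : ContinuousWithinAt xbar (Ici S) S :=
    (hx S ⟨le_rfl, hST.le⟩).mono_of_mem_nhdsWithin (Icc_mem_nhdsGE hST)
  rw [nhdsWithin_Ioc_eq_nhdsGT hST] at hFp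
  have key : ∀ θ : ℝ, 0 < θ → _ := fun θ hθ =>
    eventually_stepVar_leftMod hST hxc hA hC2 hδ hδδ hFp hθ
  have hFG : ∀ s ≠ S, F s = leftMod S δ xbar F Fp s := fun s hs => (leftMod_of_ne hs).symm
  refine le_antisymm ?_ ?_
  · refine (add_zero _).symm.trans_le (eta_add_le_of_stepVar hFG hSt fun θ hθ => ?_)
    exact (key θ hθ).mono fun δ' h => h.mono fun s hs => (add_zero _).trans_le hs.1
  · refine (eta_add_le_of_stepVar (fun s hs => (hFG s hs).symm) hSt fun θ hθ => ?_).trans_eq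
      (add_zero _)
    exact (key θ hθ).mono fun δ' h => h.mono fun s hs => hs.2.trans_eq (by rw [add_zero])

/-- Modifying `F` only at the left endpoint (by the right limit
`F(S⁺,·,·)`) reduces the cumulative variation exactly by
`sup_{a ∈ A} d_H(F(S⁺,x̄(S),a), F(S,x̄(S),a))`:  for every `t ∈ (S,T]`,
`η(t) = η̂(t) + sup_{a∈A} d_H(F(S⁺,x̄(S),a), F(S,x̄(S),a))`. -/
theorem stmt19 {n k : ℕ} (S T : ℝ) (hST : S < T)
    (A : Set (Eucl k)) (hA : IsCompact A)
    (F : ℝ → Eucl n → Eucl k → Set (Eucl n))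
    (xbar : ℝ → Eucl n) (hx : ContinuousOn xbar (Icc S T))
    (hBV : eta F xbar A S T < ⊤)
    (δbar : ℝ) (hδbar : 0 < δbar) (hfin : etaD F xbar A S δbar T < ⊤)
    (hC1 : HypC1 F xbar A S T δbar)
    (γ : ℝ → ℝ) (hC2 : HypC2 F xbar A S T δbar γ)
    (δ : ℝ) (hδ : 0 < δ) (hδδ : δ < δbar)
    (Fp : Eucl n → Eucl k → Set (Eucl n))
    (hFp : ∀ x ∈ closedBall (xbar S) δ, ∀ a ∈ A,
      Tendsto (fun s => EMetric.hausdorffEdist (F s x a) (Fp x a))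
        (𝓝[Ioc S T] S) (𝓝 0)) :
    ∀ t : ℝ, S < t → t ≤ T →
      eta F xbar A S t =
        eta (leftMod S δ xbar F Fp) xbar A S t +
          ⨆ a ∈ A, EMetric.hausdorffEdist (Fp (xbar S) a) (F S (xbar S) a) :=
  stmt19_general S T hST A hA F xbar hx δbar γ hC2 δ hδ hδδ Fp hFp
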